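/- Let P be a finite ordered set with a minimal element a such that a is not maximal in P and every upper cover of a in P is a minimal element of P ∖ {a}, and let x, y be two incomparable elements of P ∖ {a}. The map φ sending a greedy linear extension L of P that puts x before y to the greedy linear extension L ∖ {a} of P ∖ {a} (obtained by deleting a from L) is a bijection from the set of greedy linear extensions of P putting x before y onto the set of greedy linear extensions of P ∖ {a} putting x before y. -/

import Mathlib

variable {α : Type*}

/-- `x` is a minimal element of the subposet induced on the finite set `s`. -/
def IsMinimalIn [PartialOrder α] (s : Finset α) (x : α) : Prop :=
  x ∈ s ∧ ∀ y ∈ s, ¬ y < x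

/-- A valid greedy choice of the next element, given the previously chosen element `p`
(`none` at the start) and the set `s` of not-yet-chosen elements: the next element must
be minimal among the remaining elements and, moreover, if some element strictly above `p`
is minimal among the remaining elements, then the next element must be strictly above `p`
(i.e. it is a minimal element of `U(p)` that can extend the linear extension). -/
def GreedyNext [PartialOrder α] (p : Option α) (s : Finset α) (x : α) : Prop :=
  IsMinimalIn s x ∧
    ∀ q : α, p = some q → (∃ v ∈ s, q < v ∧ IsMinimalIn s v) → q < x

/-- The list is a valid greedy enumeration of the finite set `s`, the previously chosen
element being `p` (`none` at the start). -/
def GreedyFrom [PartialOrder α] [DecidableEq α] :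
    Option α → Finset α → List α → Prop
  | _, s, [] => s = ∅
  | p, s, x :: l => GreedyNext p s x ∧ GreedyFrom (some x) (s.erase x) l

/-- `l` is a greedy linear extension of the finite poset `α`, presented as the list of
its elements in increasing order. -/
def IsGreedyLE [PartialOrder α] [DecidableEq α] [Fintype α] (l : List α) : Prop :=
  GreedyFrom (none : Option α) Finset.univ l

/-- Delete the element `a` from a list, recording in the type that the remaining entries
are different from `a`; this realizes the operation `L ↦ L ∖ {a}`. -/
def delElt [DecidableEq α] (a : α) (l : List α) : List {z : α // z ≠ a} :=
  l.filterMap fun z => if h : z ≠ a then some ⟨z, h⟩ else none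

/-! Removing `a` from a greedy extension of `P` keeps it greedy: deleting `a` from the set of
remaining elements can only make minimal some upper covers of `a`, and by hypothesis nothing but
`a` lies below those, so no greedy obligation changes. Conversely, in a greedy extension `a` is
placed exactly before the first element above `a`: nothing above `a` can come earlier, and once
`a` is placed the greedy rule forces one of its upper covers next, all of which are minimal at
that point. So a greedy extension of `P` is recovered from its restriction to `P ∖ {a}` by
inserting `a` before the first element above it, and this insertion maps greedy extensions of
`P ∖ {a}` to greedy extensions of `P`. -/

open Finset

namespace List

theorem idxOf_map_of_injective {β : Type*} [BEq α] [LawfulBEq α] [BEq β] [LawfulBEq β]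
    {f : α → β} (hf : Function.Injective f) (x : α) (l : List α) :
    (l.map f).idxOf (f x) = l.idxOf x := by
  induction l with
  | nil => rfl
  | cons w t ih => by_cases h : w = x <;> simp [h, hf.eq_iff, ih]

theorem idxOf_filter_lt_idxOf_filter_iff [DecidableEq α] (p : α → Bool) {x y : α}
    (hx : p x) (hy : p y) (l : List α) :
    (l.filter p).idxOf x < (l.filter p).idxOf y ↔ l.idxOf x < l.idxOf y := by
  induction l with
  | nil => simp
  | cons w t ih =>
    by_cases hw : p w
    · rw [filter_cons_of_pos hw]
      rcases eq_or_ne w x with rfl | hwx <;> rcases eq_or_ne w y with rfl | hwy <;>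
        simp [idxOf_cons_ne, *]
    · have hwx : w ≠ x := by rintro rfl; exact hw hx
      have hwy : w ≠ y := by rintro rfl; exact hw hy
      simp [filter_cons_of_neg hw, idxOf_cons_ne _ hwx, idxOf_cons_ne _ hwy, ih]

end List

section Insert

variable [Preorder α] [DecidableRel (α := α) (· < ·)]

def insertBeforeGT (a : α) : List α → List α
  | [] => [a]
  | w :: t => if a < w then a :: w :: t else w :: insertBeforeGT a t

theorem filter_insertBeforeGT [DecidableEq α] {a : α} {m : List α} (ham : a ∉ m) :
    (insertBeforeGT a m).filter (· ≠ a) = m := by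
  induction m with
  | nil => simp [insertBeforeGT]
  | cons w t ih =>
    obtain ⟨hwa, hat⟩ : w ≠ a ∧ a ∉ t := by simpa [eq_comm] using ham
    have hfilt : t.filter (· ≠ a) = t := List.filter_eq_self.2 fun z hz => by
      simpa using ne_of_mem_of_not_mem hz hat
    by_cases haw : a < w
    · rw [insertBeforeGT, if_pos haw, List.filter_cons, List.filter_cons, if_neg (by simp),
        if_pos (by simpa using hwa), hfilt]
    · rw [insertBeforeGT, if_neg haw, List.filter_cons, if_pos (by simpa using hwa), ih hat]

end Insert

section Greedy

variable [PartialOrder α] [DecidableEq α] {a : α} {s : Finset α}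

theorem GreedyFrom.mem {p : Option α} {l : List α} (h : GreedyFrom p s l) :
    ∀ z ∈ l, z ∈ s := by
  induction l generalizing p s with
  | nil => simp
  | cons x t ih =>
    intro z hz
    rcases List.mem_cons.1 hz with rfl | hz
    · exact h.1.1.1
    · exact mem_of_mem_erase (ih h.2 z hz)

theorem IsMinimalIn.erase {v : α} (hv : IsMinimalIn s v) (hva : v ≠ a) :
    IsMinimalIn (s.erase a) v :=
  ⟨mem_erase.2 ⟨hva, hv.1⟩, fun u hu => hv.2 u (mem_of_mem_erase hu)⟩

theorem IsMinimalIn.of_erase {v : α} (hv : IsMinimalIn (s.erase a) v) (hav : ¬ a < v) :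
    IsMinimalIn s v := by
  refine ⟨mem_of_mem_erase hv.1, fun u hu huv => ?_⟩
  obtain rfl | hua := eq_or_ne u a
  · exact hav huv
  · exact hv.2 u (mem_erase.2 ⟨hua, hu⟩) huv

theorem covBy_of_isMinimalIn_erase (hs : ∀ z, a < z → z ∈ s) {v : α}
    (hv : IsMinimalIn (s.erase a) v) (hav : a < v) : a ⋖ v :=
  ⟨hav, fun z haz hzv => hv.2 z (mem_erase.2 ⟨haz.ne', hs z haz⟩) hzv⟩

theorem exists_isMinimalIn_erase_gt (hmax : ¬ IsMax a)
    (hcov : ∀ b : α, a ⋖ b → ∀ u : α, u ≠ a → ¬ u < b) (hs : ∀ z, a < z → z ∈ s) :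
    ∃ v ∈ s.erase a, a < v ∧ IsMinimalIn (s.erase a) v := by
  classical
  obtain ⟨b, hab⟩ := not_isMax_iff.1 hmax
  obtain ⟨v, hv⟩ := (s.filter (a < ·)).exists_minimal ⟨b, mem_filter.2 ⟨hs b hab, hab⟩⟩
  obtain ⟨hvs, hav⟩ := mem_filter.1 hv.prop
  have hcv : a ⋖ v := ⟨hav, fun z haz hzv => hv.not_lt (mem_filter.2 ⟨hs z haz, haz⟩) hzv⟩
  have hvm : IsMinimalIn (s.erase a) v :=
    ⟨mem_erase.2 ⟨hav.ne', hvs⟩, fun u hu => hcov v hcv u (ne_of_mem_erase hu)⟩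
  exact ⟨v, hvm.1, hav, hvm⟩

/-- The greedy obligation created by a previously chosen `q ≠ a` is the same whether or not `a`
is still available. -/
theorem exists_isMinimalIn_erase_gt_iff (hmin : IsMin a)
    (hcov : ∀ b : α, a ⋖ b → ∀ u : α, u ≠ a → ¬ u < b) (hs : ∀ z, a < z → z ∈ s)
    {q : α} (hqa : q ≠ a) :
    (∃ v ∈ s.erase a, q < v ∧ IsMinimalIn (s.erase a) v) ↔
      ∃ v ∈ s, q < v ∧ IsMinimalIn s v := by
  constructor
  · rintro ⟨v, -, hqv, hv⟩
    have hav : ¬ a < v := fun hav =>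
      hcov v (covBy_of_isMinimalIn_erase hs hv hav) q hqa hqv
    exact ⟨v, mem_of_mem_erase hv.1, hqv, hv.of_erase hav⟩
  · rintro ⟨v, -, hqv, hv⟩
    have hvm := hv.erase (fun hva => hmin.not_lt (hva ▸ hqv))
    exact ⟨v, hvm.1, hqv, hvm⟩

theorem greedyNext_erase_iff (hmin : IsMin a)
    (hcov : ∀ b : α, a ⋖ b → ∀ u : α, u ≠ a → ¬ u < b) (hs : ∀ z, a < z → z ∈ s)
    {p : Option α} (hp : ∀ q, p = some q → q ≠ a) {x : α} (hxa : x ≠ a) (hax : ¬ a < x) :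
    GreedyNext p (s.erase a) x ↔ GreedyNext p s x := by
  have hobl := fun q hq => exists_isMinimalIn_erase_gt_iff hmin hcov hs (hp q hq)
  constructor
  · rintro ⟨hx, hgr⟩
    exact ⟨hx.of_erase hax, fun q hq hex => hgr q hq ((hobl q hq).2 hex)⟩
  · rintro ⟨hx, hgr⟩
    exact ⟨hx.erase hxa, fun q hq hex => hgr q hq ((hobl q hq).1 hex)⟩

theorem greedyNext_self_and_greedyNext_iff (hmin : IsMin a)
    (hcov : ∀ b : α, a ⋖ b → ∀ u : α, u ≠ a → ¬ u < b) (ha : a ∈ s)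
    (hs : ∀ z, a < z → z ∈ s) {p : Option α} (hp : ∀ q, p = some q → q ≠ a)
    {w : α} (haw : a < w) :
    GreedyNext p s a ∧ GreedyNext (some a) (s.erase a) w ↔ GreedyNext p (s.erase a) w := by
  have hobl := fun q hq => exists_isMinimalIn_erase_gt_iff hmin hcov hs (hp q hq)
  constructor
  · rintro ⟨⟨-, hgr⟩, hw, -⟩
    exact ⟨hw, fun q hq hex => absurd (hgr q hq ((hobl q hq).1 hex)) hmin.not_lt⟩
  · rintro ⟨hw, hgr⟩
    refine ⟨⟨⟨ha, fun _ _ => hmin.not_lt⟩, fun q hq hex => ?_⟩, hw, fun _ hq _ => ?_⟩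
    · exact absurd (hgr q hq ((hobl q hq).2 hex))
        (hcov w (covBy_of_isMinimalIn_erase hs hw haw) q (hp q hq))
    · exact Option.some.inj hq ▸ haw

variable [DecidableRel (α := α) (· < ·)]

theorem greedyFrom_insertBeforeGT_iff (hmin : IsMin a) (hmax : ¬ IsMax a)
    (hcov : ∀ b : α, a ⋖ b → ∀ u : α, u ≠ a → ¬ u < b) {m : List α} (ham : a ∉ m)
    {p : Option α} (ha : a ∈ s) (hs : ∀ z, a < z → z ∈ s) (hp : ∀ q, p = some q → q ≠ a) :
    GreedyFrom p s (insertBeforeGT a m) ↔ GreedyFrom p (s.erase a) m := by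
  induction m generalizing p s with
  | nil =>
    obtain ⟨v, hv, -⟩ := exists_isMinimalIn_erase_gt hmax hcov hs
    exact ⟨And.right, fun h => absurd h (ne_empty_of_mem hv)⟩
  | cons w t ih =>
    obtain ⟨hwa, hat⟩ : w ≠ a ∧ a ∉ t := by simpa [eq_comm] using ham
    by_cases haw : a < w
    · simp only [insertBeforeGT, if_pos haw, GreedyFrom, ← and_assoc]
      rw [greedyNext_self_and_greedyNext_iff hmin hcov ha hs hp haw]
    · simp only [insertBeforeGT, if_neg haw, GreedyFrom]
      rw [greedyNext_erase_iff hmin hcov hs hp hwa haw, erase_right_comm,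
        ih hat (mem_erase.2 ⟨hwa.symm, ha⟩)
          (fun z haz => mem_erase.2 ⟨fun hzw => haw (hzw ▸ haz), hs z haz⟩)
          (fun q hq => Option.some.inj hq ▸ hwa)]

theorem GreedyFrom.eq_insertBeforeGT_filter (hmax : ¬ IsMax a)
    (hcov : ∀ b : α, a ⋖ b → ∀ u : α, u ≠ a → ¬ u < b) {p : Option α} {l : List α}
    (hl : GreedyFrom p s l) (ha : a ∈ s) (hs : ∀ z, a < z → z ∈ s) :
    l = insertBeforeGT a (l.filter (· ≠ a)) := by
  induction l generalizing p s with
  | nil => exact absurd (hl ▸ ha) (notMem_empty a)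
  | cons x t ih =>
    obtain ⟨hx, ht⟩ := hl
    obtain rfl | hxa := eq_or_ne x a
    · obtain ⟨v, hv, hav, hvm⟩ := exists_isMinimalIn_erase_gt hmax hcov hs
      have hfilt : t.filter (· ≠ x) = t := List.filter_eq_self.2 fun z hz => by
        simpa using (mem_erase.1 (ht.mem z hz)).1
      cases t with
      | nil => exact absurd (ht ▸ hv) (notMem_empty v)
      | cons w t =>
        have hxw : x < w := ht.1.2 x rfl ⟨v, hv, hav, hvm⟩
        rw [List.filter_cons, if_neg (by simp), hfilt, insertBeforeGT, if_pos hxw]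
    · have hax : ¬ a < x := hx.1.2 a ha
      have := ih ht (mem_erase.2 ⟨hxa.symm, ha⟩)
        (fun z haz => mem_erase.2 ⟨fun hzx => hax (hzx ▸ haz), hs z haz⟩)
      rw [List.filter_cons, if_pos (by simpa using hxa), insertBeforeGT, if_neg hax, ← this]

end Greedy

section Embedding

variable {β : Type*} [PartialOrder α] [PartialOrder β] (f : α ↪o β)

theorem isMinimalIn_map {s : Finset α} {x : α} :
    IsMinimalIn (s.map f.toEmbedding) (f x) ↔ IsMinimalIn s x := by
  simp [IsMinimalIn]

theorem greedyNext_map {p : Option α} {s : Finset α} {x : α} :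
    GreedyNext (p.map f) (s.map f.toEmbedding) (f x) ↔ GreedyNext p s x := by
  simp [GreedyNext, isMinimalIn_map]

theorem greedyFrom_map [DecidableEq α] [DecidableEq β] {p : Option α} {s : Finset α}
    {l : List α} :
    GreedyFrom (p.map f) (s.map f.toEmbedding) (l.map f) ↔ GreedyFrom p s l := by
  induction l generalizing p s with
  | nil => simp [GreedyFrom]
  | cons x t ih =>
    simp only [List.map_cons, GreedyFrom, greedyNext_map]
    exact and_congr_right fun _ => by
      rw [show f x = f.toEmbedding x from rfl, ← map_erase]; exact ih (p := some x)

end Embedding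

section Delete

variable [DecidableEq α] {a : α}

theorem map_val_delElt (l : List α) : (delElt a l).map Subtype.val = l.filter (· ≠ a) := by
  induction l with
  | nil => rfl
  | cons w t ih => by_cases hwa : w = a <;> simp_all [delElt]

theorem idxOf_delElt_lt_iff {x y : α} (hx : x ≠ a) (hy : y ≠ a) (l : List α) :
    (delElt a l).idxOf ⟨x, hx⟩ < (delElt a l).idxOf ⟨y, hy⟩ ↔ l.idxOf x < l.idxOf y := by
  rw [← List.idxOf_filter_lt_idxOf_filter_iff (· ≠ a) (by simpa) (by simpa), ← map_val_delElt,
    List.idxOf_map_of_injective Subtype.val_injective ⟨x, hx⟩,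
    List.idxOf_map_of_injective Subtype.val_injective ⟨y, hy⟩]

theorem isGreedyLE_subtype_ne_iff [PartialOrder α] [Fintype α] (l : List {z : α // z ≠ a}) :
    IsGreedyLE l ↔ GreedyFrom none (univ.erase a) (l.map Subtype.val) := by
  have huniv : univ.map (OrderEmbedding.subtype (· ≠ a)).toEmbedding = univ.erase a :=
    (univ_map_subtype _).trans (filter_ne' _ _)
  rw [IsGreedyLE, ← greedyFrom_map (OrderEmbedding.subtype (· ≠ a)), huniv]
  rfl

end Delete

theorem bijOn_delElt_greedy_general [Fintype α] [DecidableEq α] [PartialOrder α]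
    (a : α) (hmin : IsMin a) (hmax : ¬ IsMax a)
    (hcov : ∀ b : α, a ⋖ b → ∀ u : α, u ≠ a → ¬ u < b)
    (x y : α) (hx : x ≠ a) (hy : y ≠ a) :
    Set.BijOn (delElt a)
      {l : List α | IsGreedyLE l ∧ l.idxOf x < l.idxOf y}
      {l : List {z : α // z ≠ a} |
        IsGreedyLE l ∧ l.idxOf ⟨x, hx⟩ < l.idxOf ⟨y, hy⟩} := by
  classical
  have hs : ∀ z, a < z → z ∈ (univ : Finset α) := fun z _ => mem_univ z
  have hnone : ∀ q, (none : Option α) = some q → q ≠ a := by simp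
  have insert_iff {m : List α} (ham : a ∉ m) :
      IsGreedyLE (insertBeforeGT a m) ↔ GreedyFrom none (univ.erase a) m :=
    greedyFrom_insertBeforeGT_iff hmin hmax hcov ham (mem_univ a) hs hnone
  have eq_insert {l : List α} (hl : IsGreedyLE l) : l = insertBeforeGT a (l.filter (· ≠ a)) :=
    GreedyFrom.eq_insertBeforeGT_filter hmax hcov hl (mem_univ a) hs
  refine ⟨?_, ?_, ?_⟩
  · rintro l ⟨hl, hxy⟩
    refine ⟨?_, (idxOf_delElt_lt_iff hx hy l).2 hxy⟩
    rw [isGreedyLE_subtype_ne_iff, map_val_delElt, ← insert_iff (by simp)]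
    rwa [← eq_insert hl]
  · rintro l₁ ⟨hl₁, -⟩ l₂ ⟨hl₂, -⟩ hdel
    rw [eq_insert hl₁, eq_insert hl₂, ← map_val_delElt, ← map_val_delElt, hdel]
  · rintro l' ⟨hl', hxy⟩
    have ham : a ∉ l'.map Subtype.val := by simp
    have hdel : delElt a (insertBeforeGT a (l'.map Subtype.val)) = l' :=
      List.map_injective_iff.2 Subtype.val_injective
        (by rw [map_val_delElt, filter_insertBeforeGT ham])
    refine ⟨_, ⟨(insert_iff ham).2 ((isGreedyLE_subtype_ne_iff l').1 hl'), ?_⟩, hdel⟩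
    rwa [← idxOf_delElt_lt_iff hx hy, hdel]

/-- Let `P` be a finite ordered set with a minimal element `a` which is not maximal and
such that every upper cover of `a` is minimal in `P ∖ {a}`, and let `x`, `y` be two
incomparable elements of `P ∖ {a}`.  Then the map `L ↦ L ∖ {a}` is a bijection from the
set of greedy linear extensions of `P` putting `x` before `y` onto the set of greedy
linear extensions of `P ∖ {a}` putting `x` before `y`. -/
theorem bijOn_delElt_greedy [Fintype α] [DecidableEq α] [PartialOrder α]
    (a : α) (hmin : IsMin a) (hmax : ¬ IsMax a)
    (hcov : ∀ b : α, a ⋖ b → ∀ u : α, u ≠ a → ¬ u < b)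
    (x y : α) (hx : x ≠ a) (hy : y ≠ a) (hxy : ¬ x ≤ y) (hyx : ¬ y ≤ x) :
    Set.BijOn (delElt a)
      {l : List α | IsGreedyLE l ∧ l.idxOf x < l.idxOf y}
      {l : List {z : α // z ≠ a} |
        IsGreedyLE l ∧ l.idxOf ⟨x, hx⟩ < l.idxOf ⟨y, hy⟩} :=
  bijOn_delElt_greedy_general a hmin hmax hcov x y hx hy
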